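/- For any multiplicative character A on F_q and x_1,…,x_n ∈ F_q, one has A(1+x_1+⋯+x_n) = δ(x_1)⋯δ(x_n) + Σ_{k=1}^{n} (q^k/(q-1)^k) Σ_{1≤r_1<⋯<r_k≤n} (∏_{i∉{r_1,…,r_k}} δ(x_i)) Σ_{χ_1,…,χ_k} (A choose χ_1,…,χ_k) χ_1(x_{r_1})⋯χ_k(x_{r_k}), where the inner sum is over all k-tuples of multiplicative characters of F_q and δ(x)=1 if x=0 and 0 otherwise. -/

import Mathlib

/-!
Expanding `mchoose` through its Jacobi sum and summing over the characters by orthogonality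
gives `∑_χ (A choose χ₁,…,χ_k) ∏ χᵢ(yᵢ) = ((q - 1)/q)^k · A(1 + ∑ yᵢ)` when every `yᵢ ≠ 0`,
whereas the sum vanishes as soon as some `yᵢ = 0`. Hence in the expansion the summand indexed
by `S` survives only when `S` contains no zero of `x` and its complement only zeros, i.e. for
`S` the support of `x`, and there it equals `A(1 + ∑ xᵢ)`; the leading `δ`-product is the
summand for `S = ∅`.
-/

open Finset

variable {F : Type} [Field F] [Fintype F] [DecidableEq F]

noncomputable instance : Fintype (MulChar F ℂ) := Fintype.ofFinite _

/-- Multiple Jacobi sum `J(λ₀, λ₁,…,λ_k) = Σ_{c₀+c₁+⋯+c_k=1} λ₀(c₀)·∏ λᵢ(cᵢ)`. -/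
noncomputable def mJacobi {ι : Type} [Fintype ι] [DecidableEq ι] (lam0 : MulChar F ℂ)
    (lam : ι → MulChar F ℂ) : ℂ :=
  ∑ c0 : F, ∑ c : ι → F,
    if c0 + ∑ i, c i = 1 then lam0 c0 * ∏ i, lam i (c i) else 0

/-- Finite field multinomial coefficient
`(A choose B₁,…,B_n) := (B₁⋯B_n)(-1)/qⁿ · J(A, B̄₁,…,B̄_n)`. -/
noncomputable def mchoose {ι : Type} [Fintype ι] [DecidableEq ι] (A : MulChar F ℂ)
    (B : ι → MulChar F ℂ) : ℂ :=
  (∏ i, (B i) (-1)) / (Fintype.card F : ℂ) ^ (Fintype.card ι)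
    * mJacobi A (fun i => (B i)⁻¹)

/-- Finite field binomial coefficient `(A choose B) := B(-1)/q · J(A, B̄)`. -/
noncomputable def binom (A B : MulChar F ℂ) : ℂ :=
  B (-1) / (Fintype.card F : ℂ)
    * ∑ c : F × F, if c.1 + c.2 = 1 then A c.1 * B⁻¹ c.2 else 0

theorem MulChar.sum_apply_eq_ite {M R : Type*} [CommMonoid M] [Finite M] [DecidableEq M]
    [CommRing R] [IsDomain R] [HasEnoughRootsOfUnity R (Monoid.exponent Mˣ)]
    [Fintype (MulChar M R)] (a : M) :
    ∑ χ : MulChar M R, χ a = if a = 1 then (Nat.card Mˣ : R) else 0 := by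
  split_ifs with ha
  · simp [ha, ← Nat.card_eq_fintype_card, card_eq_card_units_of_hasEnoughRootsOfUnity]
  · obtain ⟨ψ, hψ⟩ := exists_apply_ne_one_of_hasEnoughRootsOfUnity M R ha
    refine eq_zero_of_mul_eq_self_left hψ ?_
    simp only [Finset.mul_sum, ← MulChar.mul_apply]
    exact Fintype.sum_bijective _ (Group.mulLeft_bijective ψ) _ _ fun _ ↦ rfl

theorem Nat.cast_card_units {K : Type*} [Field K] [Fintype K] [DecidableEq K] {R : Type*} [AddGroupWithOne R] :
    (Nat.card Kˣ : R) = Fintype.card K - 1 := by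
  rw [Nat.card_eq_fintype_card, Fintype.card_units, Nat.cast_sub Fintype.card_pos, Nat.cast_one]

theorem Fintype.prod_ite_apply_eq {ι κ R : Type*} [Fintype ι] [DecidableEq κ]
    [CommMonoidWithZero R] (c d : ι → κ) (a : R) :
    ∏ i, (if c i = d i then a else 0) = if c = d then a ^ Fintype.card ι else 0 := by
  simp [Fintype.prod_ite_zero, funext_iff]

theorem Fintype.sum_prod_compl_ite_mul_eq {ι R : Type*} [Fintype ι] [DecidableEq ι]
    [CommSemiring R] (p : ι → Prop) [DecidablePred p] (f : Finset ι → R)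
    (hf : ∀ S, ∀ i ∈ S, p i → f S = 0) :
    ∑ S, (∏ i ∈ Sᶜ, if p i then (1 : R) else 0) * f S = f {i | ¬ p i} := by
  rw [sum_eq_single_of_mem ({i | ¬ p i} : Finset ι) (mem_univ _)]
  · rw [Finset.prod_eq_one fun i hi ↦ by simp_all, one_mul]
  · intro S _ hS
    by_cases hsub : S ⊆ ({i | ¬ p i} : Finset ι)
    · obtain ⟨i, hiT, hiS⟩ := not_subset.mp fun h ↦ hS (hsub.antisymm h)
      rw [prod_eq_zero (mem_compl.mpr hiS) (if_neg (mem_filter.mp hiT).2), zero_mul]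
    · obtain ⟨i, hiS, hpi⟩ := not_subset.mp hsub
      rw [hf S i hiS (by simpa using hpi), mul_zero]

theorem Fintype.sum_pow_card_mul_eq_add_sum_Icc {ι R : Type*} [Fintype ι] [CommSemiring R] (c : R)
    (g : Finset ι → R) :
    ∑ S, c ^ #S * g S = g ∅ + ∑ k ∈ Icc 1 (Fintype.card ι), c ^ k * ∑ S with #S = k, g S := by
  rw [← sum_fiberwise_of_maps_to (g := Finset.card) (t := range (Fintype.card ι + 1))
    (fun S _ ↦ mem_range_succ_iff.mpr (card_le_univ S)), range_eq_Ico,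
    sum_eq_sum_Ico_succ_bot (by omega : 0 < Fintype.card ι + 1), zero_add, Ico_add_one_right_eq_Icc]
  congr 1
  · simp
  · refine Finset.sum_congr rfl fun k _ ↦ ?_
    rw [Finset.mul_sum]
    exact Finset.sum_congr rfl fun S hS ↦ by rw [(mem_filter.mp hS).2]

local notation "q" => (Fintype.card F : ℂ)

theorem sum_mulChar_neg_one_mul_inv_mul (c : F) {y : F} (hy : y ≠ 0) :
    ∑ ψ : MulChar F ℂ, ψ (-1) * ψ⁻¹ c * ψ y = if c = -y then q - 1 else 0 := by
  have hc : -1 * c⁻¹ * y = 1 ↔ c = -y := by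
    rcases eq_or_ne c 0 with rfl | hc
    · simp [hy, eq_comm]
    · field_simp
      constructor <;> intro h <;> linear_combination -h
  simp only [MulChar.inv_apply', ← map_mul, MulChar.sum_apply_eq_ite, hc, Nat.cast_card_units]

theorem mchoose_mul_prod_apply {ι : Type} [Fintype ι] [DecidableEq ι] (A : MulChar F ℂ)
    (χ : ι → MulChar F ℂ) (y : ι → F) :
    mchoose A χ * ∏ i, χ i (y i) = (q ^ Fintype.card ι)⁻¹ *
      ∑ c₀ : F, ∑ c : ι → F, if c₀ + ∑ i, c i = 1 then
        A c₀ * ∏ i, χ i (-1) * (χ i)⁻¹ (c i) * χ i (y i) else 0 := by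
  simp only [mchoose, mJacobi, Finset.mul_sum, Finset.sum_mul, mul_ite, ite_mul, mul_zero,
    zero_mul, Finset.prod_mul_distrib]
  refine Finset.sum_congr rfl fun c₀ _ ↦ Finset.sum_congr rfl fun c _ ↦ ?_
  split_ifs <;> ring

theorem sum_mchoose_mul_prod_apply {ι : Type} [Fintype ι] [DecidableEq ι] (A : MulChar F ℂ)
    {y : ι → F} (hy : ∀ i, y i ≠ 0) :
    ∑ χ : ι → MulChar F ℂ, mchoose A χ * ∏ i, χ i (y i) =
      ((q - 1) / q) ^ Fintype.card ι * A (1 + ∑ i, y i) := by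
  calc ∑ χ : ι → MulChar F ℂ, mchoose A χ * ∏ i, χ i (y i)
      = (q ^ Fintype.card ι)⁻¹ * ∑ c₀ : F, ∑ c : ι → F, if c₀ + ∑ i, c i = 1 then
          A c₀ * ∏ i, ∑ ψ : MulChar F ℂ, ψ (-1) * ψ⁻¹ (c i) * ψ (y i) else 0 := by
        simp only [mchoose_mul_prod_apply, ← Finset.mul_sum, Fintype.prod_sum]
        rw [Finset.sum_comm]
        simp only [Finset.sum_comm (s := (Finset.univ : Finset (ι → MulChar F ℂ))),
          Finset.sum_ite_irrel, Finset.sum_const_zero, Finset.mul_sum]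
    _ = (q ^ Fintype.card ι)⁻¹ * ∑ c₀ : F, ∑ c : ι → F, if c₀ + ∑ i, c i = 1 then
          A c₀ * (if c = fun i ↦ -y i then (q - 1) ^ Fintype.card ι else 0) else 0 := by
        simp only [sum_mulChar_neg_one_mul_inv_mul _ (hy _), Fintype.prod_ite_apply_eq]
    _ = (q ^ Fintype.card ι)⁻¹ * ((q - 1) ^ Fintype.card ι * A (1 + ∑ i, y i)) := by
        have hc₀ (c₀ : F) : (∑ c : ι → F, if c₀ + ∑ i, c i = 1 then
            A c₀ * (if c = fun i ↦ -y i then (q - 1) ^ Fintype.card ι else 0) else 0) =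
            if c₀ = 1 + ∑ i, y i then (q - 1) ^ Fintype.card ι * A c₀ else 0 := by
          rw [Fintype.sum_eq_single (fun i ↦ -y i) fun c hc ↦ by simp [hc]]
          simp [← sub_eq_add_neg, sub_eq_iff_eq_add, mul_comm]
        simp only [hc₀, Finset.sum_ite_eq', Finset.mem_univ, if_true]
    _ = ((q - 1) / q) ^ Fintype.card ι * A (1 + ∑ i, y i) := by
        rw [div_pow]; ring

omit [DecidableEq F] in
theorem sum_mul_prod_mulChar_apply_eq_zero {ι : Type} [Fintype ι] [DecidableEq ι]
    (f : (ι → MulChar F ℂ) → ℂ) {y : ι → F} {i : ι} (hi : y i = 0) :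
    ∑ χ : ι → MulChar F ℂ, f χ * ∏ j, χ j (y j) = 0 :=
  Finset.sum_eq_zero fun χ _ ↦ by
    rw [Finset.prod_eq_zero (Finset.mem_univ i) (by rw [hi, MulChar.map_zero]), mul_zero]

theorem char_multinomial_expansion (n : ℕ) (A : MulChar F ℂ) (x : Fin n → F) :
    A (1 + ∑ i, x i) =
      (∏ i, (if x i = 0 then (1 : ℂ) else 0)) +
        ∑ k ∈ Finset.Icc 1 n,
          ((Fintype.card F : ℂ) / ((Fintype.card F : ℂ) - 1)) ^ k *
            ∑ S ∈ Finset.univ.filter (fun S : Finset (Fin n) => S.card = k),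
              (∏ i ∈ Sᶜ, (if x i = 0 then (1 : ℂ) else 0)) *
                ∑ χ : {i : Fin n // i ∈ S} → MulChar F ℂ,
                  mchoose A χ * ∏ i : {i : Fin n // i ∈ S}, χ i (x i.1) := by
  set M : Finset (Fin n) → ℂ := fun S ↦ ∑ χ : {i : Fin n // i ∈ S} → MulChar F ℂ,
    mchoose A χ * ∏ i : {i : Fin n // i ∈ S}, χ i (x i.1)
  have hq : q / (q - 1) * ((q - 1) / q) = 1 := by
    have : q - 1 ≠ 0 := sub_ne_zero.mpr (by exact_mod_cast Fintype.one_lt_card.ne')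
    field_simp
  have hM_empty : M ∅ = 1 := by
    simpa [M] using sum_mchoose_mul_prod_apply A
      (y := fun i : {i // i ∈ (∅ : Finset (Fin n))} ↦ x i) fun i ↦ absurd i.2 (notMem_empty _)
  calc A (1 + ∑ i, x i)
      = (q / (q - 1)) ^ #{i | ¬ x i = 0} * M {i | ¬ x i = 0} := by
        rw [show M {i | ¬ x i = 0} = _ from
          sum_mchoose_mul_prod_apply A fun i ↦ (mem_filter.mp i.2).2, Fintype.card_coe,
          ← mul_assoc, ← mul_pow, hq, one_pow, one_mul, sum_coe_sort _ x, sum_filter_ne_zero]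
    _ = ∑ S, (q / (q - 1)) ^ #S * ((∏ i ∈ Sᶜ, if x i = 0 then (1 : ℂ) else 0) * M S) := by
        refine (Fintype.sum_prod_compl_ite_mul_eq (fun i ↦ x i = 0)
          (fun S ↦ (q / (q - 1)) ^ #S * M S) fun S i hi hxi ↦ ?_).symm.trans
          (Finset.sum_congr rfl fun S _ ↦ mul_left_comm _ _ _)
        rw [show M S = 0 from sum_mul_prod_mulChar_apply_eq_zero _ (i := ⟨i, hi⟩) hxi, mul_zero]
    _ = _ := by
        rw [Fintype.sum_pow_card_mul_eq_add_sum_Icc, Fintype.card_fin, hM_empty, compl_empty, mul_one]
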